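/- In the free group F_4, each of the six long relators with indices in {2,3,4}, i.e. the set R_{2,3,4} corresponding to the relations λ_{2,3}λ_{2,4}λ_{3,4}=λ_{3,4}λ_{2,4}λ_{2,3}, λ_{3,2}λ_{3,4}λ_{2,4}=λ_{2,4}λ_{3,4}λ_{3,2}, λ_{2,4}λ_{2,3}λ_{4,3}=λ_{4,3}λ_{2,3}λ_{2,4}, λ_{4,2}λ_{4,3}λ_{2,3}=λ_{2,3}λ_{4,3}λ_{4,2}, λ_{3,4}λ_{3,2}λ_{4,2}=λ_{4,2}λ_{3,2}λ_{3,4}, λ_{4,3}λ_{4,2}λ_{3,2}=λ_{3,2}λ_{4,2}λ_{4,3}, lies in the normal closure of R^V(3) ∪ S_0(R^V(3)) ∪ S_1(R^V(3)) ∪ S_2(R^V(3)) ∪ CR(4), where R^V(3) ⊆ F_4 via the canonical inclusion F_3 → F_4. -/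

import Mathlib

/-- The ambient free group with generators `λ i j` indexed by ordered pairs of naturals;
the sub-free-group `F_m` is spanned by the generators `lam i j` with `1 ≤ i ≠ j ≤ m`,
and the canonical inclusion `F_m → F_{m'}` is the identity on generators. -/
abbrev FG : Type := FreeGroup (ℕ × ℕ)

/-- The generator `λ_{i,j}`. -/
def lam (i j : ℕ) : FG := FreeGroup.of (i, j)

/-- The commutativity relators `λ_{i,j} λ_{k,l} λ_{i,j}⁻¹ λ_{k,l}⁻¹` of `VP_m`,
for pairwise distinct indices `1 ≤ i, j, k, l ≤ m`. -/
def CR (m : ℕ) : Set FG :=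
  {w | ∃ i j k l : ℕ,
    1 ≤ i ∧ i ≤ m ∧ 1 ≤ j ∧ j ≤ m ∧ 1 ≤ k ∧ k ≤ m ∧ 1 ≤ l ∧ l ≤ m ∧
    i ≠ j ∧ i ≠ k ∧ i ≠ l ∧ j ≠ k ∧ j ≠ l ∧ k ≠ l ∧
    w = lam i j * lam k l * (lam i j)⁻¹ * (lam k l)⁻¹}

/-- The long relators `λ_{k,i} λ_{k,j} λ_{i,j} λ_{k,i}⁻¹ λ_{k,j}⁻¹ λ_{i,j}⁻¹` of `VP_m`,
for pairwise distinct indices `1 ≤ i, j, k ≤ m`. -/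
def LongR (m : ℕ) : Set FG :=
  {w | ∃ i j k : ℕ,
    1 ≤ i ∧ i ≤ m ∧ 1 ≤ j ∧ j ≤ m ∧ 1 ≤ k ∧ k ≤ m ∧
    i ≠ j ∧ i ≠ k ∧ j ≠ k ∧
    w = lam k i * lam k j * lam i j * (lam k i)⁻¹ * (lam k j)⁻¹ * (lam i j)⁻¹}

/-- The full relator set `R^V(m)` of the virtual pure braid group `VP_m`. -/
def RV (m : ℕ) : Set FG := CR m ∪ LongR m

/-- Value of `S_{i-1}` on a generator, given by the displayed case formulas:
for `k < l`, `S_{i-1}(λ_{k,l})` and `S_{i-1}(λ_{l,k})` according to the position of `i`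
relative to `k` and `l`. -/
def Sgen (i : ℕ) (p : ℕ × ℕ) : FG :=
  if p.1 < p.2 then
    -- the generator is `λ_{k,l}` with `k = p.1 < l = p.2`
    if i < p.1 then lam (p.1 + 1) (p.2 + 1)
    else if i = p.1 then lam p.1 (p.2 + 1) * lam (p.1 + 1) (p.2 + 1)
    else if i < p.2 then lam p.1 (p.2 + 1)
    else if i = p.2 then lam p.1 (p.2 + 1) * lam p.1 p.2
    else lam p.1 p.2
  else if p.2 < p.1 then
    -- the generator is `λ_{l,k}` with `k = p.2 < l = p.1`
    if i < p.2 then lam (p.1 + 1) (p.2 + 1)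
    else if i = p.2 then lam (p.1 + 1) (p.2 + 1) * lam (p.1 + 1) p.2
    else if i < p.1 then lam (p.1 + 1) p.2
    else if i = p.1 then lam p.1 p.2 * lam (p.1 + 1) p.2
    else lam p.1 p.2
  else lam p.1 p.2

/-- The free-group homomorphism `S_t = S_{(t+1)-1} : F_m → F_{m+1}` (doubling the
`(t+1)`-st strand), determined on generators by the displayed case formulas. -/
def Smap (t : ℕ) : FG →* FG := FreeGroup.lift (Sgen (t + 1))

/-- The relator `u * v⁻¹` of a relation `u = v`. -/
def relOf (u v : FG) : FG := u * v⁻¹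

/-- The set `R_{i,j,k}` of the six long relators with indices in `{i, j, k}`. -/
def Rtriple (i j k : ℕ) : Set FG :=
  {relOf (lam i j * lam i k * lam j k) (lam j k * lam i k * lam i j),
   relOf (lam j i * lam j k * lam i k) (lam i k * lam j k * lam j i),
   relOf (lam i k * lam i j * lam k j) (lam k j * lam i j * lam i k),
   relOf (lam k i * lam k j * lam i j) (lam i j * lam k j * lam k i),
   relOf (lam j k * lam j i * lam k i) (lam k i * lam j i * lam j k),
   relOf (lam k j * lam k i * lam j i) (lam j i * lam k i * lam k j)}

/-- The commutator `[a,b] = a⁻¹ b⁻¹ a b`. -/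
def commE (a b : FG) : FG := a⁻¹ * b⁻¹ * a * b

/-- The automorphism of the free group induced by a permutation of the indices:
`λ_{i,j} ↦ λ_{σ(i),σ(j)}`. -/
def permF (σ : Equiv.Perm ℕ) : FG →* FG :=
  FreeGroup.lift (fun p => lam (σ p.1) (σ p.2))


/-!
Work in the quotient of the free group by the normal closure, where every long relation has the
shape `a b c = c b a` (`YangBaxter a b c`). The strand-doubling map `S_t` sends a long relation on
the strands `{1, 2, 3}` to one in which two of the three letters have become products of two
generators. Thanks to the commutativity relations such a doubled relation splits into two long
relations on triples of strands, so knowing one of them gives the other. Chaining `S_2`, `S_1`,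
`S_0` moves the long relations from `{1, 2, 3}` to `{1, 2, 4}`, then `{1, 3, 4}`, then `{2, 3, 4}`.
-/

section YangBaxter

variable {G : Type*} [Group G]

def YangBaxter (a b c : G) : Prop := a * b * c = c * b * a

variable {a a₁ a₂ b b₁ b₂ c c₁ c₂ : G}

theorem YangBaxter.of_mul_mul_right (h : YangBaxter a (b₁ * b₂) (c₁ * c₂))
    (hbc : Commute b₂ c₁) (hcb : Commute b₁ c₂) (h₂ : YangBaxter a b₂ c₂) :
    YangBaxter a b₁ c₁ := by
  unfold YangBaxter at *
  refine mul_right_cancel (b := b₂ * c₂) ?_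
  calc a * b₁ * c₁ * (b₂ * c₂) = a * (b₁ * b₂) * (c₁ * c₂) := by
        simp only [mul_assoc, hbc.left_comm]
    _ = c₁ * c₂ * (b₁ * b₂) * a := h
    _ = c₁ * b₁ * (c₂ * b₂ * a) := by simp only [mul_assoc, hcb.left_comm]
    _ = c₁ * b₁ * a * (b₂ * c₂) := by rw [← h₂]; simp only [mul_assoc]

theorem YangBaxter.of_mul_mul_outer (h : YangBaxter (a₁ * a₂) b (c₁ * c₂))
    (hac₁ : Commute a₁ c₁) (hac₂ : Commute a₂ c₂) (h₂ : YangBaxter a₂ b c₁) :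
    YangBaxter a₁ b c₂ := by
  unfold YangBaxter at *
  refine mul_right_cancel (b := a₂) (mul_left_cancel (a := c₁) ?_)
  calc c₁ * (a₁ * b * c₂ * a₂) = a₁ * (c₁ * b * a₂) * c₂ := by
        simp only [mul_assoc, hac₁.left_comm, hac₂.eq]
    _ = a₁ * a₂ * b * (c₁ * c₂) := by rw [← h₂]; simp only [mul_assoc]
    _ = c₁ * c₂ * b * (a₁ * a₂) := h
    _ = c₁ * (c₂ * b * a₁ * a₂) := by simp only [mul_assoc]

theorem YangBaxter.of_mul_mul_left (h : YangBaxter (a₁ * a₂) (b₁ * b₂) c)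
    (hba : Commute b₁ a₂) (hab : Commute a₁ b₂) (h₁ : YangBaxter a₁ b₁ c) :
    YangBaxter a₂ b₂ c := by
  unfold YangBaxter at *
  refine mul_left_cancel (a := a₁ * b₁) ?_
  calc a₁ * b₁ * (a₂ * b₂ * c) = a₁ * a₂ * (b₁ * b₂) * c := by
        simp only [mul_assoc, hba.left_comm]
    _ = c * (b₁ * b₂) * (a₁ * a₂) := h
    _ = c * b₁ * a₁ * (b₂ * a₂) := by simp only [mul_assoc, ← hab.left_comm]
    _ = a₁ * b₁ * (c * b₂ * a₂) := by rw [← h₁]; simp only [mul_assoc]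

end YangBaxter

theorem QuotientGroup.yangBaxter_mk_iff {G : Type*} [Group G] {N : Subgroup G} [N.Normal]
    {a b c : G} : YangBaxter (a : G ⧸ N) b c ↔ a * b * c * a⁻¹ * b⁻¹ * c⁻¹ ∈ N := by
  simp only [YangBaxter, ← QuotientGroup.mk_mul, QuotientGroup.eq_iff_div_mem, div_eq_mul_inv,
    mul_inv_rev, mul_assoc]

theorem QuotientGroup.commute_mk_iff {G : Type*} [Group G] {N : Subgroup G} [N.Normal]
    {a b : G} : Commute (a : G ⧸ N) b ↔ a * b * a⁻¹ * b⁻¹ ∈ N := by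
  simp only [Commute, SemiconjBy, ← QuotientGroup.mk_mul, QuotientGroup.eq_iff_div_mem,
    div_eq_mul_inv, mul_inv_rev, mul_assoc]

theorem relOf_mem_of_yangBaxter {N : Subgroup FG} [N.Normal] {a b c : FG}
    (h : YangBaxter (a : FG ⧸ N) b c) : relOf (a * b * c) (c * b * a) ∈ N := by
  simpa only [relOf, mul_inv_rev, mul_assoc] using QuotientGroup.yangBaxter_mk_iff.1 h

theorem longRel_mem_RV {m i j k : ℕ}
    (h : 1 ≤ i ∧ i ≤ m ∧ 1 ≤ j ∧ j ≤ m ∧ 1 ≤ k ∧ k ≤ m ∧ i ≠ j ∧ i ≠ k ∧ j ≠ k) :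
    lam k i * lam k j * lam i j * (lam k i)⁻¹ * (lam k j)⁻¹ * (lam i j)⁻¹ ∈ RV m :=
  Or.inr ⟨i, j, k, by simpa only [and_true] using h⟩

@[simp]
theorem Smap_lam (t i j : ℕ) : Smap t (lam i j) = Sgen (t + 1) (i, j) :=
  FreeGroup.lift_apply_of

namespace R234

def relators : Set FG :=
  RV 3 ∪ (Smap 0) '' (RV 3) ∪ (Smap 1) '' (RV 3) ∪ (Smap 2) '' (RV 3) ∪ CR 4

abbrev gen (i j : ℕ) : FG ⧸ Subgroup.normalClosure relators := lam i j

theorem commute_gen {i j k l : ℕ}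
    (h : 1 ≤ i ∧ i ≤ 4 ∧ 1 ≤ j ∧ j ≤ 4 ∧ 1 ≤ k ∧ k ≤ 4 ∧ 1 ≤ l ∧ l ≤ 4 ∧
      i ≠ j ∧ i ≠ k ∧ i ≠ l ∧ j ≠ k ∧ j ≠ l ∧ k ≠ l := by decide) :
    Commute (gen i j) (gen k l) :=
  QuotientGroup.commute_mk_iff.2 <| Subgroup.subset_normalClosure <|
    Or.inr ⟨i, j, k, l, by simpa only [and_true] using h⟩

theorem yangBaxter_gen {i j k : ℕ}
    (h : 1 ≤ i ∧ i ≤ 3 ∧ 1 ≤ j ∧ j ≤ 3 ∧ 1 ≤ k ∧ k ≤ 3 ∧ i ≠ j ∧ i ≠ k ∧ j ≠ k := by decide) :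
    YangBaxter (gen k i) (gen k j) (gen i j) :=
  QuotientGroup.yangBaxter_mk_iff.2 <| Subgroup.subset_normalClosure <|
    Or.inl <| Or.inl <| Or.inl <| Or.inl <| longRel_mem_RV h

theorem yangBaxter_Smap (t i j k : ℕ) (ht : t ≤ 2 := by decide)
    (h : 1 ≤ i ∧ i ≤ 3 ∧ 1 ≤ j ∧ j ≤ 3 ∧ 1 ≤ k ∧ k ≤ 3 ∧ i ≠ j ∧ i ≠ k ∧ j ≠ k := by decide) :
    YangBaxter (Smap t (lam k i) : FG ⧸ Subgroup.normalClosure relators)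
      (Smap t (lam k j)) (Smap t (lam i j)) := by
  have hmem := Set.mem_image_of_mem (Smap t) (longRel_mem_RV h)
  simp only [map_mul, map_inv] at hmem
  refine QuotientGroup.yangBaxter_mk_iff.2 (Subgroup.subset_normalClosure ?_)
  interval_cases t <;> simp only [relators, Set.mem_union] <;> tauto

theorem yangBaxter_234 : YangBaxter (gen 2 3) (gen 2 4) (gen 3 4) := by
  have s₂ : YangBaxter (gen 1 2) (gen 1 4 * gen 1 3) (gen 2 4 * gen 2 3) := by
    simpa [Sgen] using yangBaxter_Smap 2 2 3 1
  have s₁ : YangBaxter (gen 1 3 * gen 1 2) (gen 1 4) (gen 2 4 * gen 3 4) := by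
    simpa [Sgen] using yangBaxter_Smap 1 2 3 1
  have s₀ : YangBaxter (gen 1 3 * gen 2 3) (gen 1 4 * gen 2 4) (gen 3 4) := by
    simpa [Sgen] using yangBaxter_Smap 0 2 3 1
  exact s₀.of_mul_mul_left commute_gen commute_gen <|
    s₁.of_mul_mul_outer commute_gen commute_gen <|
    s₂.of_mul_mul_right commute_gen commute_gen yangBaxter_gen

theorem yangBaxter_324 : YangBaxter (gen 3 2) (gen 3 4) (gen 2 4) := by
  have s₂ : YangBaxter (gen 2 1) (gen 2 4 * gen 2 3) (gen 1 4 * gen 1 3) := by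
    simpa [Sgen] using yangBaxter_Smap 2 1 3 2
  have s₁ : YangBaxter (gen 2 1 * gen 3 1) (gen 2 4 * gen 3 4) (gen 1 4) := by
    simpa [Sgen] using yangBaxter_Smap 1 1 3 2
  have s₀ : YangBaxter (gen 3 2 * gen 3 1) (gen 3 4) (gen 1 4 * gen 2 4) := by
    simpa [Sgen] using yangBaxter_Smap 0 1 3 2
  exact s₀.of_mul_mul_outer commute_gen commute_gen <|
    s₁.of_mul_mul_left commute_gen commute_gen <|
    s₂.of_mul_mul_right commute_gen commute_gen yangBaxter_gen

theorem yangBaxter_243 : YangBaxter (gen 2 4) (gen 2 3) (gen 4 3) := by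
  have s₂ : YangBaxter (gen 1 4 * gen 1 3) (gen 1 2) (gen 3 2 * gen 4 2) := by
    simpa [Sgen] using yangBaxter_Smap 2 3 2 1
  have s₁ : YangBaxter (gen 1 4) (gen 1 3 * gen 1 2) (gen 4 3 * gen 4 2) := by
    simpa [Sgen] using yangBaxter_Smap 1 3 2 1
  have s₀ : YangBaxter (gen 1 4 * gen 2 4) (gen 1 3 * gen 2 3) (gen 4 3) := by
    simpa [Sgen] using yangBaxter_Smap 0 3 2 1
  exact s₀.of_mul_mul_left commute_gen commute_gen <|
    s₁.of_mul_mul_right commute_gen commute_gen <|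
    s₂.of_mul_mul_outer commute_gen commute_gen yangBaxter_gen

theorem yangBaxter_423 : YangBaxter (gen 4 2) (gen 4 3) (gen 2 3) := by
  have s₂ : YangBaxter (gen 3 1 * gen 4 1) (gen 3 2 * gen 4 2) (gen 1 2) := by
    simpa [Sgen] using yangBaxter_Smap 2 1 2 3
  have s₁ : YangBaxter (gen 4 1) (gen 4 3 * gen 4 2) (gen 1 3 * gen 1 2) := by
    simpa [Sgen] using yangBaxter_Smap 1 1 2 3
  have s₀ : YangBaxter (gen 4 2 * gen 4 1) (gen 4 3) (gen 1 3 * gen 2 3) := by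
    simpa [Sgen] using yangBaxter_Smap 0 1 2 3
  exact s₀.of_mul_mul_outer commute_gen commute_gen <|
    s₁.of_mul_mul_right commute_gen commute_gen <|
    s₂.of_mul_mul_left commute_gen commute_gen yangBaxter_gen

theorem yangBaxter_342 : YangBaxter (gen 3 4) (gen 3 2) (gen 4 2) := by
  have s₂ : YangBaxter (gen 2 4 * gen 2 3) (gen 2 1) (gen 3 1 * gen 4 1) := by
    simpa [Sgen] using yangBaxter_Smap 2 3 1 2
  have s₁ : YangBaxter (gen 2 4 * gen 3 4) (gen 2 1 * gen 3 1) (gen 4 1) := by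
    simpa [Sgen] using yangBaxter_Smap 1 3 1 2
  have s₀ : YangBaxter (gen 3 4) (gen 3 2 * gen 3 1) (gen 4 2 * gen 4 1) := by
    simpa [Sgen] using yangBaxter_Smap 0 3 1 2
  exact s₀.of_mul_mul_right commute_gen commute_gen <|
    s₁.of_mul_mul_left commute_gen commute_gen <|
    s₂.of_mul_mul_outer commute_gen commute_gen yangBaxter_gen

theorem yangBaxter_432 : YangBaxter (gen 4 3) (gen 4 2) (gen 3 2) := by
  have s₂ : YangBaxter (gen 3 2 * gen 4 2) (gen 3 1 * gen 4 1) (gen 2 1) := by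
    simpa [Sgen] using yangBaxter_Smap 2 2 1 3
  have s₁ : YangBaxter (gen 4 3 * gen 4 2) (gen 4 1) (gen 2 1 * gen 3 1) := by
    simpa [Sgen] using yangBaxter_Smap 1 2 1 3
  have s₀ : YangBaxter (gen 4 3) (gen 4 2 * gen 4 1) (gen 3 2 * gen 3 1) := by
    simpa [Sgen] using yangBaxter_Smap 0 2 1 3
  exact s₀.of_mul_mul_right commute_gen commute_gen <|
    s₁.of_mul_mul_outer commute_gen commute_gen <|
    s₂.of_mul_mul_left commute_gen commute_gen yangBaxter_gen

end R234

/-- each of the six long relators of `R_{2,3,4}` lies in the normal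
closure in `F_4` of `R^V(3) ∪ S_0(R^V(3)) ∪ S_1(R^V(3)) ∪ S_2(R^V(3)) ∪ CR(4)`. -/
theorem R234_in_normalClosure :
    Rtriple 2 3 4 ⊆
      (Subgroup.normalClosure
        (RV 3 ∪ (Smap 0) '' (RV 3) ∪ (Smap 1) '' (RV 3) ∪ (Smap 2) '' (RV 3) ∪ CR 4)
        : Set FG) := by
  simp only [Rtriple, Set.insert_subset_iff, Set.singleton_subset_iff, SetLike.mem_coe]
  refine ⟨?_, ?_, ?_, ?_, ?_, ?_⟩ <;> apply relOf_mem_of_yangBaxter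
  exacts [R234.yangBaxter_234, R234.yangBaxter_324, R234.yangBaxter_243, R234.yangBaxter_423,
    R234.yangBaxter_342, R234.yangBaxter_432]
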